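/- Let M be a finite set of directed motifs, where each motif m is a finite directed graph with e_m = |edges(m)| ≥ 1, and let a_m ∈ ℝ satisfy a_m > 0 whenever e_m > 1. For measurable h : [0,1]² → [0,1] let t(m,h) = ∫_{[0,1]^{n_m}} ∏_{(i,j)∈m} h(x_i,x_j) dx and H(h) = ∫_{[0,1]²} H(h(x,y)) dx dy where H(p) = −p log p − (1−p) log(1−p) (with H(0)=H(1)=0). Then sup over measurable h : [0,1]² → [0,1] of [ Σ_{m∈M} a_m t(m,h) + H(h) ] equals max_{s∈[0,1]} [ Σ_{m∈M} a_m s^{e_m} + H(s) ], and the supremum is attained by the constant function h ≡ s* for any maximizer s* of the right-hand side. -/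

import Mathlib

open MeasureTheory

/-- The unit cube `[0,1]^n` in `Fin n → ℝ`. -/
def unitCube (n : ℕ) : Set (Fin n → ℝ) :=
  Set.univ.pi fun _ => Set.Icc (0 : ℝ) 1

/-- The unit square `[0,1]²` in `ℝ × ℝ`. -/
def unitSquare : Set (ℝ × ℝ) :=
  (Set.Icc (0 : ℝ) 1) ×ˢ (Set.Icc (0 : ℝ) 1)

/-- The Bernoulli entropy `H(p) = −p log p − (1−p) log(1−p)`, extended by `0` at the
endpoints. -/
noncomputable def bernoulliEntropy (p : ℝ) : ℝ :=
  Real.negMulLog p + Real.negMulLog (1 - p)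

/-- The homomorphism density `t(m,h)` of the motif with `n` vertices and edge set `E`
into the graphon `h`. -/
noncomputable def homDensity (n : ℕ) (E : Finset (Fin n × Fin n))
    (h : ℝ → ℝ → ℝ) : ℝ :=
  ∫ x in unitCube n, ∏ e ∈ E, h (x e.1) (x e.2)

/-- The entropy functional `H(h) = ∫_{[0,1]²} H(h(x,y)) dx dy` of a graphon. -/
noncomputable def graphonEntropy (h : ℝ → ℝ → ℝ) : ℝ :=
  ∫ p in unitSquare, bernoulliEntropy (h p.1 p.2)

/-! For a motif with `c ≥ 2` edges, AM-GM bounds `∏ₑ h(xₑ)` by `(1/c) ∑ₑ h(xₑ)^c`. The two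
endpoints of an edge are distinct, hence independent, uniform coordinates of the cube, so every
summand integrates to `∫ h^c` over the square: `t(m,h) ≤ ∫ h^{e_m}`, with equality if `e_m = 1`.
Since `a_m > 0` whenever `e_m ≥ 2`, the functional is at most `∫ (∑ a_m h^{e_m} + H(h))`, whose
integrand is pointwise at most its value at a maximizer `s*`; the constant graphon `s*` attains
this bound. -/

open Set Finset

theorem Finset.prod_le_sum_pow_card_div_card {ι : Type*} {s : Finset ι} (hs : s.Nonempty)
    {z : ι → ℝ} (hz : ∀ i ∈ s, 0 ≤ z i) :
    ∏ i ∈ s, z i ≤ (∑ i ∈ s, z i ^ #s) / #s := by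
  have hc : (0 : ℝ) < #s := by exact_mod_cast hs.card_pos
  have amgm := Real.geom_mean_le_arith_mean_weighted s (fun _ => (#s : ℝ)⁻¹)
    (fun i => z i ^ #s) (fun _ _ => by positivity) (by simp [hc.ne'])
    (fun i hi => pow_nonneg (hz i hi) _)
  convert amgm using 1
  · refine Finset.prod_congr rfl fun i hi => ?_
    rw [← Real.rpow_natCast, ← Real.rpow_mul (hz i hi), mul_inv_cancel₀ hc.ne', Real.rpow_one]
  · rw [div_eq_inv_mul, Finset.mul_sum]

theorem MeasureTheory.Measure.map_eval_pair_pi {ι α : Type*} [Fintype ι] [MeasurableSpace α]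
    (μ : ι → Measure α) [∀ i, IsProbabilityMeasure (μ i)] {i j : ι} (hij : i ≠ j) :
    (Measure.pi μ).map (fun x => (x i, x j)) = (μ i).prod (μ j) := by
  have hindep : ProbabilityTheory.IndepFun (fun x : ι → α => x i) (fun x => x j)
      (Measure.pi μ) :=
    (ProbabilityTheory.iIndepFun_pi (X := fun _ => id) fun _ => aemeasurable_id).indepFun hij
  rw [hindep.map_prod_eq_prod_map_map (measurable_pi_apply i).aemeasurable
    (measurable_pi_apply j).aemeasurable, (measurePreserving_eval μ i).map_eq,
    (measurePreserving_eval μ j).map_eq]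

instance : IsProbabilityMeasure (volume.restrict (Icc (0 : ℝ) 1)) :=
  ⟨by simp⟩

theorem volume_restrict_unitCube (n : ℕ) :
    volume.restrict (unitCube n) = Measure.pi fun _ => volume.restrict (Icc (0 : ℝ) 1) := by
  refine (Measure.pi_eq fun s hs => ?_).symm
  rw [Measure.restrict_apply (MeasurableSet.univ_pi hs), unitCube, ← Set.pi_inter_distrib,
    volume_pi_pi]
  simp_rw [Measure.restrict_apply (hs _)]

theorem volume_restrict_unitSquare :
    volume.restrict unitSquare =
      (volume.restrict (Icc (0 : ℝ) 1)).prod (volume.restrict (Icc (0 : ℝ) 1)) := by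
  rw [unitSquare, Measure.volume_eq_prod, Measure.prod_restrict]

instance (n : ℕ) : IsProbabilityMeasure (volume.restrict (unitCube n)) := by
  rw [volume_restrict_unitCube]; infer_instance

instance : IsProbabilityMeasure (volume.restrict unitSquare) := by
  rw [volume_restrict_unitSquare]; infer_instance

theorem bernoulliEntropy_eq_binEntropy : bernoulliEntropy = Real.binEntropy :=
  (Real.binEntropy_eq_negMulLog_add_negMulLog_one_sub').symm

theorem setIntegral_unitCube_comp_pair {n : ℕ} {i j : Fin n} (hij : i ≠ j) {g : ℝ × ℝ → ℝ}
    (hg : AEStronglyMeasurable g (volume.restrict unitSquare)) :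
    ∫ x in unitCube n, g (x i, x j) = ∫ p in unitSquare, g p := by
  have hmap := Measure.map_eval_pair_pi (fun _ : Fin n => volume.restrict (Icc (0 : ℝ) 1)) hij
  rw [volume_restrict_unitSquare, ← hmap] at hg
  rw [volume_restrict_unitCube, volume_restrict_unitSquare, ← hmap]
  exact (integral_map ((measurable_pi_apply i).prodMk (measurable_pi_apply j)).aemeasurable hg).symm

theorem homDensity_const (n : ℕ) (E : Finset (Fin n × Fin n)) (s : ℝ) :
    homDensity n E (fun _ _ => s) = s ^ #E := by
  simp [homDensity]

theorem graphonEntropy_const (s : ℝ) : graphonEntropy (fun _ _ => s) = bernoulliEntropy s := by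
  simp [graphonEntropy]

section Graphon

variable {h : ℝ → ℝ → ℝ}

theorem integrable_graphon_pow (hm : Measurable (Function.uncurry h))
    (hb : ∀ x y, h x y ∈ Icc (0 : ℝ) 1) (k : ℕ) :
    Integrable (fun p : ℝ × ℝ => h p.1 p.2 ^ k) (volume.restrict unitSquare) :=
  .of_mem_Icc 0 1 (hm.pow_const k).aemeasurable <| ae_of_all _ fun _ =>
    ⟨pow_nonneg (hb _ _).1 k, pow_le_one₀ (hb _ _).1 (hb _ _).2⟩

theorem integrable_bernoulliEntropy_graphon (hm : Measurable (Function.uncurry h))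
    (hb : ∀ x y, h x y ∈ Icc (0 : ℝ) 1) :
    Integrable (fun p : ℝ × ℝ => bernoulliEntropy (h p.1 p.2)) (volume.restrict unitSquare) := by
  rw [bernoulliEntropy_eq_binEntropy]
  exact .of_mem_Icc 0 (Real.log 2) (Real.binEntropy_continuous.measurable.comp hm).aemeasurable <|
    ae_of_all _ fun _ =>
      ⟨Real.binEntropy_nonneg (hb _ _).1 (hb _ _).2, Real.binEntropy_le_log_two⟩

variable {n : ℕ} {E : Finset (Fin n × Fin n)}

theorem homDensity_le_setIntegral_pow (hm : Measurable (Function.uncurry h))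
    (hb : ∀ x y, h x y ∈ Icc (0 : ℝ) 1) (hloop : ∀ e ∈ E, e.1 ≠ e.2) (hE : E.Nonempty) :
    homDensity n E h ≤ ∫ p in unitSquare, h p.1 p.2 ^ #E := by
  have hmeas (e : Fin n × Fin n) : Measurable fun x : Fin n → ℝ => h (x e.1) (x e.2) :=
    hm.comp (f := fun x : Fin n → ℝ => (x e.1, x e.2))
      ((measurable_pi_apply _).prodMk (measurable_pi_apply _))
  have hint (e : Fin n × Fin n) :
      Integrable (fun x => h (x e.1) (x e.2) ^ #E) (volume.restrict (unitCube n)) :=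
    .of_mem_Icc 0 1 ((hmeas e).pow_const _).aemeasurable <| ae_of_all _ fun _ =>
      ⟨pow_nonneg (hb _ _).1 _, pow_le_one₀ (hb _ _).1 (hb _ _).2⟩
  have hint_prod : Integrable (fun x : Fin n → ℝ => ∏ e ∈ E, h (x e.1) (x e.2))
      (volume.restrict (unitCube n)) :=
    .of_mem_Icc 0 1 (Finset.measurable_prod _ fun e _ => hmeas e).aemeasurable <|
      ae_of_all _ fun _ => ⟨prod_nonneg fun _ _ => (hb _ _).1,
        prod_le_one (fun _ _ => (hb _ _).1) fun _ _ => (hb _ _).2⟩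
  have hedge (e) (he : e ∈ E) :
      ∫ x in unitCube n, h (x e.1) (x e.2) ^ #E = ∫ p in unitSquare, h p.1 p.2 ^ #E :=
    setIntegral_unitCube_comp_pair (g := fun p => h p.1 p.2 ^ #E) (hloop e he)
      (hm.pow_const _).aestronglyMeasurable
  calc homDensity n E h ≤ ∫ x in unitCube n, (∑ e ∈ E, h (x e.1) (x e.2) ^ #E) / #E :=
        integral_mono hint_prod ((integrable_finsetSum _ fun e _ => hint e).div_const _)
          fun x => E.prod_le_sum_pow_card_div_card hE fun _ _ => (hb _ _).1
    _ = (∑ e ∈ E, ∫ x in unitCube n, h (x e.1) (x e.2) ^ #E) / #E := by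
        rw [integral_div, integral_finsetSum _ fun e _ => hint e]
    _ = ∫ p in unitSquare, h p.1 p.2 ^ #E := by
        rw [Finset.sum_congr rfl hedge, Finset.sum_const, nsmul_eq_mul,
          mul_div_cancel_left₀ _ (by exact_mod_cast hE.card_ne_zero)]

theorem homDensity_eq_setIntegral_of_card_eq_one (hm : Measurable (Function.uncurry h))
    (hloop : ∀ e ∈ E, e.1 ≠ e.2) (hE : #E = 1) :
    homDensity n E h = ∫ p in unitSquare, h p.1 p.2 ^ #E := by
  obtain ⟨e, rfl⟩ := Finset.card_eq_one.1 hE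
  simp only [homDensity, Finset.prod_singleton, Finset.card_singleton, pow_one]
  exact setIntegral_unitCube_comp_pair (g := fun p => h p.1 p.2) (hloop e (mem_singleton_self e))
    hm.aestronglyMeasurable

theorem mul_homDensity_le (hm : Measurable (Function.uncurry h))
    (hb : ∀ x y, h x y ∈ Icc (0 : ℝ) 1) (hloop : ∀ e ∈ E, e.1 ≠ e.2) (hE : E.Nonempty)
    {a : ℝ} (ha : 1 < #E → 0 < a) :
    a * homDensity n E h ≤ a * ∫ p in unitSquare, h p.1 p.2 ^ #E := by
  -- `a` may be negative for a single edge, where the bound must be an equality.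
  rcases (Nat.succ_le_of_lt hE.card_pos).eq_or_lt with hE1 | hE1
  · rw [homDensity_eq_setIntegral_of_card_eq_one hm hloop hE1.symm]
  · exact mul_le_mul_of_nonneg_left (homDensity_le_setIntegral_pow hm hb hloop hE) (ha hE1).le

theorem motifFunctional_le {ι : Type*} [Fintype ι] {nm : ι → ℕ}
    {edges : (i : ι) → Finset (Fin (nm i) × Fin (nm i))}
    (hloop : ∀ i, ∀ e ∈ edges i, e.1 ≠ e.2) (hne : ∀ i, (edges i).Nonempty)
    {a : ι → ℝ} (hpos : ∀ i, 1 < #(edges i) → 0 < a i)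
    (hm : Measurable (Function.uncurry h)) (hb : ∀ x y, h x y ∈ Icc (0 : ℝ) 1) {M : ℝ}
    (hM : ∀ s ∈ Icc (0 : ℝ) 1, (∑ i, a i * s ^ #(edges i)) + bernoulliEntropy s ≤ M) :
    (∑ i, a i * homDensity (nm i) (edges i) h) + graphonEntropy h ≤ M := by
  have hint_sum : Integrable (fun p : ℝ × ℝ => ∑ i, a i * h p.1 p.2 ^ #(edges i))
      (volume.restrict unitSquare) :=
    integrable_finsetSum _ fun i _ => (integrable_graphon_pow hm hb _).const_mul (a i)
  calc (∑ i, a i * homDensity (nm i) (edges i) h) + graphonEntropy h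
      ≤ (∑ i, a i * ∫ p in unitSquare, h p.1 p.2 ^ #(edges i)) + graphonEntropy h := by
        grw [Finset.sum_le_sum fun i _ => mul_homDensity_le hm hb (hloop i) (hne i) (hpos i)]
    _ = ∫ p in unitSquare, (∑ i, a i * h p.1 p.2 ^ #(edges i)) + bernoulliEntropy (h p.1 p.2) := by
        rw [integral_add hint_sum (integrable_bernoulliEntropy_graphon hm hb),
          integral_finsetSum _ fun i _ => (integrable_graphon_pow hm hb _).const_mul (a i)]
        simp_rw [integral_const_mul]
        rfl
    _ ≤ ∫ _ in unitSquare, M :=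
        integral_mono (hint_sum.add (integrable_bernoulliEntropy_graphon hm hb))
          (integrable_const M) fun p => hM _ (hb p.1 p.2)
    _ = M := by simp

end Graphon

/-- **The variational problem for motif models (key step of Proposition 4).** With a
finite set of motifs `m` (indexed by `ι`) with `e_m ≥ 1` edges and values `a_m > 0`
whenever `e_m > 1`, the supremum over graphons `h : [0,1]² → [0,1]` of
`∑_m a_m t(m,h) + H(h)` equals `max_{s∈[0,1]} [∑_m a_m s^{e_m} + H(s)]`, and it is
attained by the constant graphon `h ≡ s*` for any maximizer `s*`. -/
theorem stmt_11 (ι : Type) [Fintype ι] (nm : ι → ℕ)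
    (edges : (i : ι) → Finset (Fin (nm i) × Fin (nm i)))
    (hloop : ∀ i, ∀ e ∈ edges i, e.1 ≠ e.2)
    (hne : ∀ i, 1 ≤ (edges i).card)
    (a : ι → ℝ) (hpos : ∀ i, 1 < (edges i).card → 0 < a i) :
    (∃ s ∈ Set.Icc (0 : ℝ) 1,
      ∀ s' ∈ Set.Icc (0 : ℝ) 1,
        (∑ i, a i * s' ^ (edges i).card) + bernoulliEntropy s' ≤
          (∑ i, a i * s ^ (edges i).card) + bernoulliEntropy s) ∧
    (∀ s ∈ Set.Icc (0 : ℝ) 1,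
      (∀ s' ∈ Set.Icc (0 : ℝ) 1,
        (∑ i, a i * s' ^ (edges i).card) + bernoulliEntropy s' ≤
          (∑ i, a i * s ^ (edges i).card) + bernoulliEntropy s) →
      IsGreatest
        {r : ℝ | ∃ h : ℝ → ℝ → ℝ, Measurable (Function.uncurry h) ∧
          (∀ x y, h x y ∈ Set.Icc (0 : ℝ) 1) ∧
          r = (∑ i, a i * homDensity (nm i) (edges i) h) + graphonEntropy h}
        ((∑ i, a i * s ^ (edges i).card) + bernoulliEntropy s)) := by
  refine ⟨?_, fun s hs hmax => ⟨?_, ?_⟩⟩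
  · have hcont : Continuous fun s : ℝ => (∑ i, a i * s ^ #(edges i)) + bernoulliEntropy s := by
      rw [bernoulliEntropy_eq_binEntropy]
      fun_prop
    obtain ⟨s, hs, hmax⟩ :=
      isCompact_Icc.exists_isMaxOn (nonempty_Icc.2 zero_le_one) hcont.continuousOn
    exact ⟨s, hs, fun s' hs' => hmax hs'⟩
  · exact ⟨fun _ _ => s, measurable_const, fun _ _ => hs, by
      simp only [homDensity_const, graphonEntropy_const]⟩
  · rintro r ⟨h, hm, hb, rfl⟩
    exact motifFunctional_le hloop (fun i => Finset.card_pos.1 (hne i)) hpos hm hb hmax
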